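/- Let D be a noncomplete metric space with quasihyperbolic metric k_D, and let γ be a quasihyperbolic geodesic from z₁ to x₀ in D. Suppose points y₁ = z₁, y₂, ..., y_{m+2} = x₀ are successive points on γ such that k_D(y_i, y_{i+1}) ≤ a₄ and ℓ(γ[y_i, y_{i+1}]) ≤ 2a₄·d_D(y_i) for all i, and d_D(y_{i+1}) = 2·d_D(y_i) for 1 ≤ i ≤ m+1. Then for every y ∈ γ[z₁, x₀], ℓ(γ[z₁, y]) ≤ 4a₄·e^{a₄}·d_D(y). -/

import Mathlib

open Set Metric

noncomputable section

variable {D : Type*} [MetricSpace D]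

/-- Distance from a point to the metric boundary `∂D = D̄ \ D`. -/
def dB (x : D) : ℝ :=
  Metric.infDist (x : UniformSpace.Completion D)
    ((Set.range ((↑) : D → UniformSpace.Completion D))ᶜ)

/-- A rectifiable curve from `x` to `y`, given in (1-Lipschitz) arclength
parametrization on `[0, L]`; `L` is its length. -/
structure Curve (D : Type*) [MetricSpace D] (x y : D) where
  L : ℝ
  hL : 0 ≤ L
  γ : ℝ → D
  lip : LipschitzOnWith 1 γ (Set.Icc 0 L)
  h0 : γ 0 = x
  h1 : γ L = y

/-- Quasihyperbolic length of the subarc with parameters in `[s,t]`. -/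
def Curve.qhLenOn {x y : D} (c : Curve D x y) (s t : ℝ) : ℝ :=
  ∫ u in s..t, 1 / dB (c.γ u)

/-- Quasihyperbolic length of a curve. -/
def Curve.qhLen {x y : D} (c : Curve D x y) : ℝ := c.qhLenOn 0 c.L

/-- The quasihyperbolic distance: infimum of quasihyperbolic lengths of curves. -/
def qhDist (x y : D) : ℝ := sInf {r : ℝ | ∃ c : Curve D x y, r = c.qhLen}

/-- Every pair of points is joined by a rectifiable curve. -/
def RectConnected (D : Type*) [MetricSpace D] : Prop :=
  ∀ x y : D, Nonempty (Curve D x y)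

/-- A length space: distance is the infimum of lengths of joining curves. -/
def IsLengthSpace (D : Type*) [MetricSpace D] : Prop :=
  ∀ x y : D, ∀ ε > 0, ∃ c : Curve D x y, c.L ≤ dist x y + ε

/-- A quasihyperbolic geodesic. -/
def Curve.IsQHGeodesic {x y : D} (c : Curve D x y) : Prop :=
  ∀ s t : ℝ, s ∈ Set.Icc 0 c.L → t ∈ Set.Icc 0 c.L → s ≤ t →
    c.qhLenOn s t = qhDist (c.γ s) (c.γ t)

/-- An `a`-cone arc: `min{ℓ(α[x,z]), ℓ(α[z,y])} ≤ a·d_D(z)` for all `z` on the arc. -/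
def Curve.IsConeArc {x y : D} (c : Curve D x y) (a : ℝ) : Prop :=
  ∀ t ∈ Set.Icc 0 c.L, min t (c.L - t) ≤ a * dB (c.γ t)

/-- A `(λ,μ)`-quasigeodesic with respect to the quasihyperbolic metric. -/
def Curve.IsQuasigeodesic {x y : D} (c : Curve D x y) (lam mu : ℝ) : Prop :=
  ∀ s t : ℝ, s ∈ Set.Icc 0 c.L → t ∈ Set.Icc 0 c.L → s ≤ t →
    c.qhLenOn s t ≤ lam * qhDist (c.γ s) (c.γ t) + mu

/-- An `a`-John space. -/
def IsJohn (D : Type*) [MetricSpace D] (a : ℝ) : Prop :=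
  ∀ x y : D, ∃ c : Curve D x y, c.IsConeArc a

/-- A `c`-uniform space. -/
def IsUniform (D : Type*) [MetricSpace D] (c : ℝ) : Prop :=
  ∀ x y : D, ∃ α : Curve D x y, α.L ≤ c * dist x y ∧ α.IsConeArc c

/-- Gromov product with respect to the quasihyperbolic metric. -/
def gromovProd (x y w : D) : ℝ := (qhDist x w + qhDist y w - qhDist x y) / 2

/-- `(D,k)` is Gromov `δ`-hyperbolic (four-point condition). -/
def QHHyperbolic (D : Type*) [MetricSpace D] (δ : ℝ) : Prop :=
  ∀ x y z w : D, min (gromovProd x y w) (gromovProd y z w) - δ ≤ gromovProd x z w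

/-- `(D,k)` is `K`-roughly starlike with respect to `w`. -/
def RoughlyStarlike (D : Type*) [MetricSpace D] (K : ℝ) (w : D) : Prop :=
  ∀ x : D, ∃ γ : ℝ → D, γ 0 = w ∧
    (∀ s t : ℝ, 0 ≤ s → 0 ≤ t → qhDist (γ s) (γ t) = |s - t|) ∧
    ∃ t : ℝ, 0 ≤ t ∧ qhDist x (γ t) ≤ K

/-- The `h`-coarse quasihyperbolic length of the part of the curve `β` with
parameters in `[s,t]`. -/
def coarseLen {E : Type*} [MetricSpace E] (β : ℝ → E) (s t h : ℝ) : ℝ :=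
  sSup {r : ℝ | ∃ n : ℕ, ∃ u : Fin (n + 1) → ℝ, Monotone u ∧
    (∀ i, u i ∈ Set.Icc s t) ∧
    (∀ i : Fin n, h ≤ qhDist (β (u i.castSucc)) (β (u i.succ))) ∧
    r = ∑ i : Fin n, qhDist (β (u i.castSucc)) (β (u i.succ))}

/-- `λ`-annular quasiconvexity. -/
def AnnularQuasiconvex (X : Type*) [MetricSpace X] (lam : ℝ) : Prop :=
  ∀ (x : X) (r r' : ℝ), 0 < r' → r' < r →
    ∀ y z : X, y ∈ Metric.ball x r \ Metric.ball x r' →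
      z ∈ Metric.ball x r \ Metric.ball x r' →
      ∃ c : Curve X y z, c.L ≤ lam * dist y z ∧
        ∀ t ∈ Set.Icc 0 c.L, c.γ t ∈ Metric.ball x (lam * r) \ Metric.ball x (r' / lam)

end

/-!
The doubling condition makes the steps geometric: the parameter of `yᵢ₊₁` is at most
`2a₄ (d_D(y₁) + ⋯ + d_D(yᵢ)) ≤ 4a₄ d_D(yᵢ)`. For `y = γ(s)` between `yᵢ` and `yᵢ₊₁`, the
1-Lipschitz bound `d_D(γ(u)) ≤ d_D(y) + (s - u)` compares `1 / d_D` along `γ` with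
`1 / (d_D(y) + s - u)`, whence `log (d_D(yᵢ) / d_D(y)) ≤ k_D(yᵢ, y) ≤ k_D(yᵢ, yᵢ₊₁) ≤ a₄`.
-/

open MeasureTheory Real

section RealAnalysis

variable {g : ℝ → ℝ} {a b : ℝ}

lemma le_exp_integral_one_div_mul (hab : a ≤ b) (hg : LipschitzOnWith 1 g (Icc a b))
    (hpos : ∀ u ∈ Icc a b, 0 < g u) :
    g a ≤ exp (∫ u in a..b, 1 / g u) * g b := by
  have hgb : 0 < g b := hpos b ⟨hab, le_rfl⟩
  -- `1 / g` dominates `u ↦ 1 / (g b + b - u)`, whose integral is explicit.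
  have hlip : ∀ u ∈ Icc a b, g u ≤ g b + (b - u) := fun u hu => by
    have := hg.dist_le_mul u hu b ⟨hab, le_rfl⟩
    rw [NNReal.coe_one, one_mul, Real.dist_eq, Real.dist_eq] at this
    linarith [le_abs_self (g u - g b), abs_of_nonpos (by linarith [hu.2] : u - b ≤ 0)]
  have hcmp : ∫ u in a..b, (g b + b - u)⁻¹ ≤ ∫ u in a..b, 1 / g u := by
    refine intervalIntegral.integral_mono_on hab ?_ ?_ fun u hu => ?_
    · refine ContinuousOn.intervalIntegrable_of_Icc hab ?_
      exact ContinuousOn.inv₀ (by fun_prop) fun u hu =>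
        (by linarith [hu.2] : 0 < g b + b - u).ne'
    · refine ContinuousOn.intervalIntegrable_of_Icc hab ?_
      exact continuousOn_const.div hg.continuousOn fun u hu => (hpos u hu).ne'
    · rw [one_div]
      exact inv_anti₀ (hpos u hu) (by linarith [hlip u hu])
  have hexplicit : ∫ u in a..b, (g b + b - u)⁻¹ = log ((g b + (b - a)) / g b) := by
    rw [intervalIntegral.integral_comp_sub_left (fun x : ℝ => x⁻¹), integral_inv]
    · ring_nf
    · exact notMem_uIcc_of_lt (by linarith) (by linarith)
  have hratio : (g b + (b - a)) / g b ≤ exp (∫ u in a..b, 1 / g u) := by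
    rw [← exp_log (by positivity : 0 < (g b + (b - a)) / g b)]
    exact exp_le_exp.mpr (hexplicit ▸ hcmp)
  rw [div_le_iff₀ hgb] at hratio
  linarith [hlip a ⟨le_rfl, hab⟩]

lemma not_intervalIntegrable_one_div_of_lipschitzOnWith (hab : a < b)
    (hg : LipschitzOnWith 1 g (Icc a b)) (hpos : ∀ u ∈ Ico a b, 0 < g u) (hb : g b = 0) :
    ¬ IntervalIntegrable (fun u => 1 / g u) volume a b := by
  intro hint
  -- `g u ≤ b - u`, so `1 / g` dominates the non-integrable `|(u - b)⁻¹|`.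
  have hsing : IntervalIntegrable (fun u => (u - b)⁻¹) volume a b := by
    refine hint.mono_fun (by fun_prop) ?_
    rw [uIoc_of_le hab.le]
    refine ae_restrict_of_forall_mem measurableSet_Ioc fun u hu => ?_
    rcases hu.2.lt_or_eq with hub | rfl
    · have hgu := hpos u ⟨hu.1.le, hub⟩
      have := hg.dist_le_mul u ⟨hu.1.le, hu.2⟩ b ⟨hab.le, le_rfl⟩
      rw [NNReal.coe_one, one_mul, Real.dist_eq, Real.dist_eq, hb, sub_zero,
        abs_of_pos hgu, abs_of_neg (by linarith)] at this
      simp only [norm_inv, Real.norm_eq_abs, one_div, abs_of_neg (by linarith : u - b < 0),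
        abs_of_pos hgu]
      exact inv_anti₀ hgu this
    · simp
  simp [hab.ne, hab.le] at hsing

end RealAnalysis

section QuasihyperbolicGeodesics

variable {D : Type*} [MetricSpace D]

lemma dB_nonneg (x : D) : 0 ≤ dB x := infDist_nonneg

lemma lipschitzWith_dB : LipschitzWith 1 (dB : D → ℝ) := by
  have h := (lipschitz_infDist_pt (range ((↑) : D → UniformSpace.Completion D))ᶜ).comp
    (UniformSpace.Completion.coe_isometry (α := D)).lipschitz
  rw [mul_one] at h
  exact h

namespace Curve

variable {x y : D} (c : Curve D x y)

lemma lipschitzOnWith_dB : LipschitzOnWith 1 (fun u => dB (c.γ u)) (Icc 0 c.L) := by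
  simpa only [mul_one, Function.comp_def] using lipschitzWith_dB.comp_lipschitzOnWith c.lip

lemma qhLen_nonneg : 0 ≤ c.qhLen :=
  intervalIntegral.integral_nonneg c.hL fun _ _ => one_div_nonneg.mpr (dB_nonneg _)

/-- Follow `c` up to the parameter `t`, then walk back along it to the parameter `b`. -/
def forthAndBack {b t : ℝ} (hb : 0 ≤ b) (hbt : b ≤ t) (ht : t ≤ c.L) : Curve D x (c.γ b) where
  L := 2 * t - b
  hL := by linarith
  γ u := c.γ (t - |t - u|)
  lip := by
    have hfold : LipschitzWith 1 fun u : ℝ => t - |t - u| :=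
      LipschitzWith.of_dist_le_mul fun u v => by
        simp only [Real.dist_eq, NNReal.coe_one, one_mul, sub_sub_sub_cancel_left]
        exact (abs_abs_sub_abs_le_abs_sub _ _).trans_eq
          (by rw [sub_sub_sub_cancel_left, abs_sub_comm])
    have hmaps : MapsTo (fun u : ℝ => t - |t - u|) (Icc 0 (2 * t - b)) (Icc 0 c.L) :=
      fun u hu => ⟨by cases abs_cases (t - u) <;> linarith [hu.1, hu.2],
        by linarith [abs_nonneg (t - u)]⟩
    simpa only [mul_one, Function.comp_def] using c.lip.comp hfold.lipschitzOnWith hmaps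
  h0 := by simp [abs_of_nonneg (hb.trans hbt), c.h0]
  h1 := by
    rw [show t - (2 * t - b) = -(t - b) by ring, abs_neg, abs_of_nonneg (by linarith)]
    ring_nf

lemma forthAndBack_γ_of_le {b t : ℝ} (hb : 0 ≤ b) (hbt : b ≤ t) (ht : t ≤ c.L) {u : ℝ}
    (hu : u ≤ t) : (c.forthAndBack hb hbt ht).γ u = c.γ u := by
  simp [forthAndBack, abs_of_nonneg (sub_nonneg.mpr hu)]

end Curve

lemma qhDist_le_qhLen {x y : D} (c : Curve D x y) : qhDist x y ≤ c.qhLen :=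
  csInf_le ⟨0, by rintro _ ⟨c', rfl⟩; exact c'.qhLen_nonneg⟩ ⟨c, rfl⟩

lemma qhDist_nonneg (x y : D) : 0 ≤ qhDist x y :=
  Real.sInf_nonneg fun _ ⟨c, hc⟩ => hc ▸ c.qhLen_nonneg

namespace Curve.IsQHGeodesic

variable {x y : D} {c : Curve D x y}

/-- A geodesic cannot reach the boundary: at the first parameter `t₀` where `d_D` vanishes,
`1 / d_D` is not integrable on `[0, t₀]`, so the curve running to `t₀` and back to `t₀ / 2`
has junk quasihyperbolic length `0`, whereas the geodesic gives `k_D(x, γ(t₀ / 2)) > 0`. -/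
theorem dB_pos (hc : c.IsQHGeodesic) (hx : 0 < dB x) : ∀ u ∈ Icc 0 c.L, 0 < dB (c.γ u) := by
  set g := fun u => dB (c.γ u) with hg
  by_contra! hzero
  obtain ⟨t₀, ⟨ht₀, hgt₀⟩, hfirst⟩ : ∃ t₀, IsLeast (Icc 0 c.L ∩ g ⁻¹' {0}) t₀ := by
    obtain ⟨u, hu, hgu⟩ := hzero
    have hclosed := c.lipschitzOnWith_dB.continuousOn.preimage_isClosed_of_isClosed
      isClosed_Icc (isClosed_singleton (x := (0 : ℝ)))
    exact (isCompact_Icc.of_isClosed_subset hclosed inter_subset_left).exists_isLeast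
      ⟨u, hu, le_antisymm hgu (dB_nonneg _)⟩
  have hpos : ∀ u ∈ Ico 0 t₀, 0 < g u := fun u hu => (dB_nonneg _).lt_of_ne fun h =>
    (hu.2.trans_le (hfirst ⟨⟨hu.1, hu.2.le.trans ht₀.2⟩, h.symm⟩)).false
  have ht₀pos : 0 < t₀ := ht₀.1.lt_of_ne fun h => by
    have hg0 : g 0 = 0 := h ▸ hgt₀
    simp only [hg, c.h0] at hg0
    exact hx.ne' hg0
  have hhalf : 0 ≤ t₀ / 2 := by positivity
  set β := c.forthAndBack hhalf (by linarith) ht₀.2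
  have hβ : β.qhLen = 0 := by
    refine intervalIntegral.integral_undef fun hint => ?_
    refine not_intervalIntegrable_one_div_of_lipschitzOnWith ht₀pos
      (c.lipschitzOnWith_dB.mono (Icc_subset_Icc_right ht₀.2)) hpos hgt₀ ?_
    refine (hint.mono_set (uIcc_subset_uIcc left_mem_uIcc ?_)).congr fun u hu => ?_
    · rw [uIcc_of_le (by change (0 : ℝ) ≤ 2 * t₀ - t₀ / 2; linarith)]
      exact ⟨ht₀pos.le, by change t₀ ≤ 2 * t₀ - t₀ / 2; linarith⟩
    · rw [uIoc_of_le ht₀pos.le] at hu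
      simp only [β, forthAndBack_γ_of_le _ _ _ _ hu.2]
  have hgeo := hc 0 (t₀ / 2) ⟨le_rfl, c.hL⟩ ⟨hhalf, by linarith [ht₀.2]⟩ hhalf
  rw [c.h0] at hgeo
  have hlt : 0 < c.qhLenOn 0 (t₀ / 2) := by
    have hsub : Icc 0 (t₀ / 2) ⊆ Ico 0 t₀ := fun u hu => ⟨hu.1, by linarith [hu.2]⟩
    refine intervalIntegral.intervalIntegral_pos_of_pos_on ?_ (fun u hu => one_div_pos.mpr
      (hpos u (hsub (Ioo_subset_Icc_self hu)))) (by positivity)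
    refine ContinuousOn.intervalIntegrable_of_Icc hhalf (continuousOn_const.div ?_
      fun u hu => (hpos u (hsub hu)).ne')
    exact c.lipschitzOnWith_dB.continuousOn.mono fun u hu => ⟨hu.1, (hsub hu).2.le.trans ht₀.2⟩
  linarith [hβ ▸ qhDist_le_qhLen β]

theorem dB_le_exp_qhDist_mul (hc : c.IsQHGeodesic) (hx : 0 < dB x) {a s b : ℝ} (ha : 0 ≤ a)
    (has : a ≤ s) (hsb : s ≤ b) (hb : b ≤ c.L) :
    dB (c.γ a) ≤ exp (qhDist (c.γ a) (c.γ b)) * dB (c.γ s) := by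
  have hpos := hc.dB_pos hx
  have hsub : Icc a b ⊆ Icc 0 c.L := Icc_subset_Icc ha hb
  have hint : IntervalIntegrable (fun u => 1 / dB (c.γ u)) volume a b :=
    ContinuousOn.intervalIntegrable_of_Icc (has.trans hsb) (continuousOn_const.div
      (c.lipschitzOnWith_dB.continuousOn.mono hsub) fun u hu => (hpos u (hsub hu)).ne')
  calc dB (c.γ a) ≤ exp (∫ u in a..s, 1 / dB (c.γ u)) * dB (c.γ s) :=
        le_exp_integral_one_div_mul has
          (c.lipschitzOnWith_dB.mono (Icc_subset_Icc ha (hsb.trans hb)))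
          fun u hu => hpos u ⟨ha.trans hu.1, hu.2.trans (hsb.trans hb)⟩
    _ ≤ exp (∫ u in a..b, 1 / dB (c.γ u)) * dB (c.γ s) := by
        gcongr ?_ * _
        · exact (hpos s ⟨ha.trans has, hsb.trans hb⟩).le
        refine exp_le_exp.mpr (intervalIntegral.integral_mono_interval le_rfl has hsb ?_ hint)
        exact Filter.Eventually.of_forall fun _ => one_div_nonneg.mpr (dB_nonneg _)
    _ = exp (qhDist (c.γ a) (c.γ b)) * dB (c.γ s) := by
        rw [← hc a b ⟨ha, has.trans (hsb.trans hb)⟩ ⟨ha.trans (has.trans hsb), hb⟩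
          (has.trans hsb)]
        rfl

end Curve.IsQHGeodesic

end QuasihyperbolicGeodesics

lemma Fin.exists_castSucc_le_le_succ {α : Type*} [LinearOrder α] {n : ℕ} (f : Fin (n + 2) → α)
    {s : α} (h0 : f 0 ≤ s) (hlast : s ≤ f (Fin.last (n + 1))) :
    ∃ i : Fin (n + 1), f i.castSucc ≤ s ∧ s ≤ f i.succ := by
  induction n with
  | zero => exact ⟨0, h0, hlast⟩
  | succ n ih =>
    by_cases h1 : s ≤ f 1
    · exact ⟨0, h0, h1⟩
    · obtain ⟨i, hi⟩ := ih (fun j => f j.succ) (le_of_not_ge h1) hlast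
      exact ⟨i.succ, hi⟩

section Doubling

variable {n : ℕ} {t d : Fin (n + 1) → ℝ}

lemma eq_two_pow_mul_of_doubling (hd : ∀ i : Fin n, d i.succ = 2 * d i.castSucc)
    (j : Fin (n + 1)) : d j = 2 ^ (j : ℕ) * d 0 := by
  induction j using Fin.induction with
  | zero => simp
  | succ i ih => rw [hd, ih, Fin.val_succ, Fin.val_castSucc, pow_succ]; ring

lemma le_four_mul_of_doubling {a : ℝ} (h0 : t 0 = 0)
    (ht : ∀ i : Fin n, t i.succ - t i.castSucc ≤ 2 * a * d i.castSucc)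
    (hd : ∀ i : Fin n, d i.succ = 2 * d i.castSucc) (hnn : 0 ≤ a * d 0) (i : Fin n) :
    t i.succ ≤ 4 * a * d i.castSucc := by
  -- the geometric summation `d 0 + ⋯ + d (j - 1) = d j - d 0`
  have hsum : ∀ j, t j + 2 * a * d 0 ≤ 2 * a * d j := by
    intro j
    induction j using Fin.induction with
    | zero => simp [h0]
    | succ j ih => rw [hd j]; linarith [ht j]
  have := hsum i.succ
  rw [hd i] at this
  linarith

end Doubling

theorem stmt15_general {D : Type*} [MetricSpace D]
    (a₄ : ℝ) (z₁ x₀ : D) (γ : Curve D z₁ x₀) (hgeo : γ.IsQHGeodesic)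
    (m : ℕ) (tt : Fin (m + 2) → ℝ)
    (h0 : tt 0 = 0) (hlast : tt (Fin.last (m + 1)) = γ.L)
    (hmem : ∀ i, tt i ∈ Set.Icc 0 γ.L)
    (hk : ∀ i : Fin (m + 1),
      qhDist (γ.γ (tt i.castSucc)) (γ.γ (tt i.succ)) ≤ a₄)
    (hlen : ∀ i : Fin (m + 1),
      tt i.succ - tt i.castSucc ≤ 2 * a₄ * dB (γ.γ (tt i.castSucc)))
    (hdb : ∀ i : Fin (m + 1),
      dB (γ.γ (tt i.succ)) = 2 * dB (γ.γ (tt i.castSucc))) :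
    ∀ s ∈ Set.Icc 0 γ.L, s ≤ 4 * a₄ * Real.exp a₄ * dB (γ.γ s) := by
  intro s hs
  have ha₄ : 0 ≤ a₄ := (qhDist_nonneg _ _).trans (hk 0)
  obtain ⟨i, hti, hts⟩ := Fin.exists_castSucc_le_le_succ tt (h0 ▸ hs.1) (hlast ▸ hs.2)
  have hs_le : s ≤ 4 * a₄ * dB (γ.γ (tt i.castSucc)) := hts.trans <|
    le_four_mul_of_doubling (d := fun j => dB (γ.γ (tt j))) h0 hlen hdb
      (mul_nonneg ha₄ (dB_nonneg _)) i
  rcases (dB_nonneg z₁).eq_or_lt with hz | hz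
  · have hyi : dB (γ.γ (tt i.castSucc)) = 0 := by
      rw [eq_two_pow_mul_of_doubling (d := fun j => dB (γ.γ (tt j))) hdb, h0, γ.h0, ← hz,
        mul_zero]
    rw [hyi, mul_zero] at hs_le
    exact hs_le.trans (mul_nonneg (by positivity) (dB_nonneg _))
  · calc s ≤ 4 * a₄ * dB (γ.γ (tt i.castSucc)) := hs_le
      _ ≤ 4 * a₄ * (exp a₄ * dB (γ.γ s)) := by
        gcongr
        refine (hgeo.dB_le_exp_qhDist_mul hz (hmem _).1 hti hts (hmem _).2).trans ?_
        gcongr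
        exacts [dB_nonneg _, hk i]
      _ = 4 * a₄ * exp a₄ * dB (γ.γ s) := by ring

/-- summation step in the proof of Theorem 1.5: if successive
points `y₁ = z₁, …, y_{m+2} = x₀` on a quasihyperbolic geodesic satisfy
`k(yᵢ, yᵢ₊₁) ≤ a₄`, `ℓ(γ[yᵢ, yᵢ₊₁]) ≤ 2a₄·d_D(yᵢ)` and `d_D(yᵢ₊₁) = 2·d_D(yᵢ)`,
then `ℓ(γ[z₁, y]) ≤ 4a₄·e^{a₄}·d_D(y)` for every `y` on `γ`. -/
theorem stmt15 {D : Type*} [MetricSpace D] (hnc : ¬ CompleteSpace D)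
    (a₄ : ℝ) (z₁ x₀ : D) (γ : Curve D z₁ x₀) (hgeo : γ.IsQHGeodesic)
    (m : ℕ) (tt : Fin (m + 2) → ℝ) (hmono : Monotone tt)
    (h0 : tt 0 = 0) (hlast : tt (Fin.last (m + 1)) = γ.L)
    (hmem : ∀ i, tt i ∈ Set.Icc 0 γ.L)
    (hk : ∀ i : Fin (m + 1),
      qhDist (γ.γ (tt i.castSucc)) (γ.γ (tt i.succ)) ≤ a₄)
    (hlen : ∀ i : Fin (m + 1),
      tt i.succ - tt i.castSucc ≤ 2 * a₄ * dB (γ.γ (tt i.castSucc)))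
    (hdb : ∀ i : Fin (m + 1),
      dB (γ.γ (tt i.succ)) = 2 * dB (γ.γ (tt i.castSucc))) :
    ∀ s ∈ Set.Icc 0 γ.L, s ≤ 4 * a₄ * Real.exp a₄ * dB (γ.γ s) :=
  stmt15_general a₄ z₁ x₀ γ hgeo m tt h0 hlast hmem hk hlen hdb
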